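/- Define a : ℝ² → ℝ by a(x₁,x₂) = 2x₁x₂ + x₂²(1 − x₁² − x₂²), and define ŭ : ℝ² → ℝ by ŭ(x) = 0 if a(x) ≤ 0 and ŭ(x) = −a(x)/(2x₂³) otherwise. Then ŭ is not locally bounded at the point (1,0): for every neighborhood U of (1,0) and every B > 0 there exists x ∈ U with |ŭ(x)| > B. In particular, a(1,ε) = 2ε − ε⁴ > 0 for all sufficiently small ε > 0, and a(1,ε)/(2ε³) → ∞ as ε → 0⁺. -/
import Mathlib


open Set Filter

/-- The constraint function of the example with unbounded optimizer. -/
noncomputable def aFun (x : ℝ × ℝ) : ℝ :=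
  2 * x.1 * x.2 + x.2 ^ 2 * (1 - x.1 ^ 2 - x.2 ^ 2)

/-- The parametric optimizer of `min (1/2)u²` s.t. `a(x) + 2x₂³·u ≤ 0`. -/
noncomputable def ubreve (x : ℝ × ℝ) : ℝ :=
  if aFun x ≤ 0 then 0 else -aFun x / (2 * x.2 ^ 3)

lemma aFun_eq (ε : ℝ) : aFun (1, ε) = 2 * ε - ε ^ 4 := by
  simp [aFun]; ring

lemma aFun_pos {ε : ℝ} (h0 : 0 < ε) (h1 : ε < 1) : 0 < aFun (1, ε) := by
  rw [aFun_eq]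
  nlinarith [pow_lt_one₀ h0.le h1 (three_ne_zero), pow_pos h0 3]

lemma tendsto_key :
    Tendsto (fun ε : ℝ => aFun (1, ε) / (2 * ε ^ 3)) (nhdsWithin 0 (Ioi 0)) atTop := by
  have h1 : Tendsto (fun ε : ℝ => (ε ^ 2)⁻¹) (nhdsWithin 0 (Ioi 0)) atTop := by
    apply Tendsto.comp tendsto_inv_nhdsGT_zero
    apply tendsto_nhdsWithin_of_tendsto_nhds_of_eventually_within
    · have : Tendsto (fun ε : ℝ => ε ^ 2) (nhds 0) (nhds (0 ^ 2)) :=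
        (continuous_pow 2).tendsto 0
      simpa using this.mono_left nhdsWithin_le_nhds
    · filter_upwards [self_mem_nhdsWithin] with ε (hε : 0 < ε)
      exact pow_pos hε 2
  have h2 : Tendsto (fun ε : ℝ => -(ε / 2)) (nhdsWithin 0 (Ioi 0)) (nhds 0) := by
    have : Tendsto (fun ε : ℝ => -(ε / 2)) (nhds (0:ℝ)) (nhds (-(0/2))) := by
      exact (tendsto_id.div_const 2).neg
    simpa using this.mono_left nhdsWithin_le_nhds
  have h3 : Tendsto (fun ε : ℝ => (ε ^ 2)⁻¹ + -(ε / 2)) (nhdsWithin 0 (Ioi 0)) atTop :=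
    h1.atTop_add h2
  apply h3.congr'
  filter_upwards [self_mem_nhdsWithin] with ε (hε : 0 < ε)
  rw [aFun_eq]
  field_simp
  ring

/-- `ŭ` is not locally bounded at `(1,0)`; in particular
`a(1,ε) = 2ε − ε⁴ > 0` for all sufficiently small `ε > 0`, and `a(1,ε)/(2ε³) → ∞`
as `ε → 0⁺`. -/
theorem stmt_14 :
    (∀ U ∈ nhds ((1, 0) : ℝ × ℝ), ∀ B : ℝ, 0 < B → ∃ x ∈ U, B < |ubreve x|) ∧
    (∀ ε : ℝ, aFun (1, ε) = 2 * ε - ε ^ 4) ∧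
    (∃ ε₀ : ℝ, 0 < ε₀ ∧ ∀ ε : ℝ, 0 < ε → ε < ε₀ → 0 < aFun (1, ε)) ∧
    Tendsto (fun ε : ℝ => aFun (1, ε) / (2 * ε ^ 3)) (nhdsWithin 0 (Ioi 0)) atTop := by
  refine ⟨?_, aFun_eq, ⟨1, one_pos, fun ε h0 h1 => aFun_pos h0 h1⟩, tendsto_key⟩
  intro U hU B hB
  -- eventually (1, ε) ∈ U
  have hmap : Tendsto (fun ε : ℝ => ((1, ε) : ℝ × ℝ)) (nhdsWithin 0 (Ioi 0))
      (nhds ((1, 0) : ℝ × ℝ)) := by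
    have : Tendsto (fun ε : ℝ => ((1, ε) : ℝ × ℝ)) (nhds 0) (nhds ((1, 0) : ℝ × ℝ)) :=
      (Continuous.prodMk_right 1).tendsto 0
    exact this.mono_left nhdsWithin_le_nhds
  have hU' : ∀ᶠ ε in nhdsWithin (0:ℝ) (Ioi 0), ((1, ε) : ℝ × ℝ) ∈ U := hmap hU
  have hBig : ∀ᶠ ε in nhdsWithin (0:ℝ) (Ioi 0), B < aFun (1, ε) / (2 * ε ^ 3) :=
    tendsto_key.eventually_gt_atTop B
  have hsmall : ∀ᶠ ε in nhdsWithin (0:ℝ) (Ioi 0), ε < 1 :=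
    eventually_nhdsWithin_of_eventually_nhds
      (tendsto_id.eventually_lt_const one_pos)
  have := (hU'.and (hBig.and (hsmall.and self_mem_nhdsWithin))).exists
  obtain ⟨ε, hεU, hεB, hε1, (hε0 : 0 < ε)⟩ := this
  refine ⟨(1, ε), hεU, ?_⟩
  have hpos := aFun_pos hε0 hε1
  have hval : ubreve (1, ε) = -aFun (1, ε) / (2 * ε ^ 3) := by
    rw [ubreve, if_neg (not_le.mpr hpos)]
  rw [hval, neg_div, abs_neg, abs_of_pos]
  · exact hεB
  · exact lt_trans hB hεB
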